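/- arXiv:2106.00875 — 3 statements merged into one kernel-verified Lean document; each statement's English description precedes it below -/
import Mathlib

section
/- For every prime power q, every finite field F with |F| = q, and all reals ε, δ > 0 with ε + δ < 1/2, for all sufficiently large n there exists an n×n matrix M over F such that for every n×n matrix S over F with at most ⌊δ·n²/log₂ n⌋ nonzero entries, the rank of M + S is strictly greater than ε·n. -/
/-! A matrix that is not `(r, s)`-rigid has the form `B * C - S` with `B` of size `n × r`,
`C` of size `r × n` and `S` with at most `s` nonzero entries. A sparse `S` is a sum of `s`
matrices with a single nonzero entry, so there are at most `q ^ (2nr) * (n²q) ^ s` such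
matrices. For `r = ⌊εn⌋` and `s = ⌊δn²/log₂ n⌋`, using `n² ≤ q ^ (2 log₂ n)`, this is
`q ^ ((2ε + 2δ + o(1)) n²) < q ^ (n²)`, so some `n × n` matrix is rigid. -/

def nonzeroEntries {n : ℕ} {F : Type*} [Zero F] [DecidableEq F]
    (S : Matrix (Fin n) (Fin n) F) : ℕ :=
  (Finset.univ.filter (fun p : Fin n × Fin n => S p.1 p.2 ≠ 0)).card

open Finset Pointwise

theorem Finset.sum_mem_nsmul {ι α : Type*} [AddCommMonoid α] [DecidableEq α] {E : Finset α}
    {t : Finset ι} {f : ι → α} (hf : ∀ i ∈ t, f i ∈ E) : ∑ i ∈ t, f i ∈ #t • E := by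
  classical
  induction t using Finset.induction_on with
  | empty => simp
  | insert a t ha ih =>
    rw [sum_insert ha, card_insert_of_notMem ha, succ_nsmul, add_comm (f a)]
    exact add_mem_add (ih fun i hi => hf i (mem_insert_of_mem hi)) (hf a (mem_insert_self a t))

theorem Matrix.exists_mul_eq_of_rank_le {m n K : Type*} [Field K] [Fintype n] {r : ℕ}
    (A : Matrix m n K) (h : A.rank ≤ r) :
    ∃ (B : Matrix m (Fin r) K) (C : Matrix (Fin r) n K), A = B * C := by
  classical
  let V := LinearMap.range A.mulVecLin
  let e : V ≃ₗ[K] (Fin (Module.finrank K V) → K) := (Module.finBasis K V).equivFun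
  let g : (Fin r → K) →ₗ[K] V := e.symm.toLinearMap ∘ₗ LinearMap.funLeft K K (Fin.castLE h)
  have hg : Function.Surjective g := e.symm.surjective.comp
    (LinearMap.funLeft_surjective_of_injective _ _ _ (Fin.castLE_injective h))
  obtain ⟨c, hc⟩ := Module.projective_lifting_property g A.mulVecLin.rangeRestrict hg
  refine ⟨LinearMap.toMatrix' (V.subtype ∘ₗ g), LinearMap.toMatrix' c, ?_⟩
  rw [← LinearMap.toMatrix'_comp, LinearMap.comp_assoc, hc]
  exact (LinearMap.toMatrix'_toLin' A).symm

theorem Matrix.eq_sum_single_filter_ne_zero {m n R : Type*} [Fintype m] [Fintype n]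
    [DecidableEq m] [DecidableEq n] [AddCommMonoid R] [DecidableEq R] (S : Matrix m n R) :
    S = ∑ p : m × n with S p.1 p.2 ≠ 0, Matrix.single p.1 p.2 (S p.1 p.2) := by
  rw [sum_filter_of_ne, Fintype.sum_prod_type]
  · exact S.matrix_eq_sum_single
  · intro p _ hp hS
    simp [hS] at hp

theorem card_filter_nonzeroEntries_le {n : ℕ} {R : Type*} [AddCommMonoid R] [Fintype R]
    [DecidableEq R] (hn : n ≠ 0) (s : ℕ) :
    #{S : Matrix (Fin n) (Fin n) R | nonzeroEntries S ≤ s} ≤ (n ^ 2 * Fintype.card R) ^ s := by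
  let E : Finset (Matrix (Fin n) (Fin n) R) :=
    univ.image fun x : Fin n × Fin n × R => Matrix.single x.1 x.2.1 x.2.2
  have hE0 : 0 ∈ E :=
    mem_image.2 ⟨(⟨0, by omega⟩, ⟨0, by omega⟩, 0), mem_univ _, Matrix.single_zero _ _⟩
  have hE : #E ≤ n ^ 2 * Fintype.card R := card_image_le.trans (by simp [sq, mul_assoc])
  have hsub : ({S | nonzeroEntries S ≤ s} : Finset (Matrix (Fin n) (Fin n) R)) ⊆ s • E := by
    intro S hS
    rw [Matrix.eq_sum_single_filter_ne_zero S]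
    exact nsmul_subset_nsmul_right hE0 (mem_filter.1 hS).2
      (sum_mem_nsmul fun p _ => mem_image_of_mem _ (mem_univ (p.1, p.2, _)))
  calc _ ≤ #(s • E) := card_le_card hsub
    _ ≤ #E ^ s := card_nsmul_le
    _ ≤ _ := Nat.pow_le_pow_left hE s

theorem Fintype.card_matrix (m n α : Type*) [Fintype m] [Fintype n] [Fintype α]
    [DecidableEq m] [DecidableEq n] :
    Fintype.card (Matrix m n α) = Fintype.card α ^ (Fintype.card m * Fintype.card n) := by
  rw [Fintype.card_congr Matrix.of.symm, Fintype.card_fun, Fintype.card_fun, ← pow_mul, mul_comm]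

section Rigidity

variable {F : Type*} [Field F] [Fintype F] [DecidableEq F] {n : ℕ}

def IsRigid (M : Matrix (Fin n) (Fin n) F) (r s : ℕ) : Prop :=
  ∀ S : Matrix (Fin n) (Fin n) F, nonzeroEntries S ≤ s → r < (M + S).rank

theorem exists_isRigid_of_card_lt (hn : n ≠ 0) {r s : ℕ}
    (h : Fintype.card F ^ (2 * n * r) * (n ^ 2 * Fintype.card F) ^ s
      < Fintype.card F ^ (n ^ 2)) :
    ∃ M : Matrix (Fin n) (Fin n) F, IsRigid M r s := by
  set q := Fintype.card F
  let sparse : Finset (Matrix (Fin n) (Fin n) F) := {S | nonzeroEntries S ≤ s}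
  let nonRigid := (univ ×ˢ sparse).image
    fun x : (Matrix (Fin n) (Fin r) F × Matrix (Fin r) (Fin n) F) × _ => x.1.1 * x.1.2 - x.2
  have hcard : #nonRigid < #(univ : Finset (Matrix (Fin n) (Fin n) F)) := calc
    #nonRigid ≤ q ^ (n * r) * q ^ (r * n) * #sparse :=
      card_image_le.trans (by simp [card_product, Fintype.card_matrix, q])
    _ ≤ q ^ (2 * n * r) * (n ^ 2 * q) ^ s := by
      rw [← pow_add, show n * r + r * n = 2 * n * r by ring]
      exact Nat.mul_le_mul_left _ (card_filter_nonzeroEntries_le hn s)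
    _ < q ^ (n ^ 2) := h
    _ = _ := by simp [Fintype.card_matrix, q, sq]
  obtain ⟨M, -, hM⟩ := exists_mem_notMem_of_card_lt_card hcard
  refine ⟨M, fun S hS => ?_⟩
  by_contra! hrank
  obtain ⟨B, C, hBC⟩ := (M + S).exists_mul_eq_of_rank_le hrank
  refine hM (mem_image.2 ⟨((B, C), S), mem_product.2 ⟨mem_univ _, mem_filter.2 ⟨mem_univ _, hS⟩⟩,
    ?_⟩)
  rw [← hBC, add_sub_cancel_right]

end Rigidity

open Filter Real

theorem pow_mul_pow_lt_pow_of_exponent_lt {q n r s : ℕ} (hq : 2 ≤ q) (hn : n ≠ 0)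
    (h : 2 * n * r + (2 * logb 2 n + 1) * s < (n : ℝ) ^ 2) :
    q ^ (2 * n * r) * (n ^ 2 * q) ^ s < q ^ (n ^ 2) := by
  have hq1 : (1 : ℝ) < q := by exact_mod_cast hq
  have hq0 : (0 : ℝ) < q := zero_lt_one.trans hq1
  have hn1 : (1 : ℝ) ≤ n := by exact_mod_cast Nat.one_le_iff_ne_zero.2 hn
  have hnq : (n : ℝ) ≤ (q : ℝ) ^ logb 2 n := calc
    (n : ℝ) = 2 ^ logb 2 n := (rpow_logb two_pos (by norm_num) (by linarith)).symm
    _ ≤ (q : ℝ) ^ logb 2 n :=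
      rpow_le_rpow zero_le_two (by exact_mod_cast hq) (logb_nonneg one_lt_two hn1)
  have hbase : (n : ℝ) ^ 2 * q ≤ (q : ℝ) ^ (2 * logb 2 n + 1) := by
    rw [rpow_add hq0, rpow_one, mul_comm 2, rpow_mul hq0.le, rpow_two]
    gcongr
  rw [← Nat.cast_lt (α := ℝ)]
  push_cast
  calc (q : ℝ) ^ (2 * n * r) * ((n : ℝ) ^ 2 * q) ^ s
      ≤ (q : ℝ) ^ ((2 * n * r : ℕ) : ℝ) * ((q : ℝ) ^ (2 * logb 2 n + 1)) ^ (s : ℝ) := by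
        rw [rpow_natCast, rpow_natCast]
        gcongr
    _ = (q : ℝ) ^ (2 * n * r + (2 * logb 2 n + 1) * s) := by
        rw [← rpow_mul hq0.le, ← rpow_add hq0]
        push_cast
        ring_nf
    _ < (q : ℝ) ^ ((n ^ 2 : ℕ) : ℝ) := rpow_lt_rpow_of_exponent_lt hq1 (by push_cast; exact h)
    _ = (q : ℝ) ^ (n ^ 2) := rpow_natCast _ _

theorem eventually_rigidity_exponent_lt {ε δ : ℝ} (hε : 0 ≤ ε) (hδ : 0 ≤ δ)
    (hεδ : ε + δ < 1 / 2) :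
    ∀ᶠ n : ℕ in atTop, 2 * n * ⌊ε * n⌋₊ + (2 * logb 2 n + 1) * ⌊δ * (n : ℝ) ^ 2 / logb 2 n⌋₊
      < (n : ℝ) ^ 2 := by
  have hc : 0 < 1 - 2 * (ε + δ) := by linarith
  have hlg := (tendsto_logb_atTop one_lt_two).comp tendsto_natCast_atTop_atTop
  filter_upwards [hlg.eventually_gt_atTop (δ / (1 - 2 * (ε + δ))), eventually_gt_atTop 0]
    with n hK hn
  set lg := logb 2 n
  have hlg0 : 0 < lg := (div_nonneg hδ hc.le).trans_lt hK
  have hn0 : (0 : ℝ) < n := by exact_mod_cast hn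
  have hr : (⌊ε * n⌋₊ : ℝ) ≤ ε * n := Nat.floor_le (by positivity)
  have hs : (⌊δ * (n : ℝ) ^ 2 / lg⌋₊ : ℝ) ≤ δ * n ^ 2 / lg := Nat.floor_le (by positivity)
  have hδlg : δ / lg < 1 - 2 * (ε + δ) := by
    rwa [div_lt_iff₀ hlg0, mul_comm, ← div_lt_iff₀ hc]
  calc 2 * n * ⌊ε * n⌋₊ + (2 * lg + 1) * ⌊δ * (n : ℝ) ^ 2 / lg⌋₊
      ≤ 2 * n * (ε * n) + (2 * lg + 1) * (δ * n ^ 2 / lg) := by gcongr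
    _ = (2 * (ε + δ) + δ / lg) * n ^ 2 := by field_simp; ring
    _ < 1 * n ^ 2 := by gcongr; linarith
    _ = n ^ 2 := one_mul _

theorem exists_rigid_matrix_general
    (F : Type) [Field F] [Fintype F] [DecidableEq F]
    (ε δ : ℝ) (hε : 0 < ε) (hδ : 0 < δ) (hεδ : ε + δ < 1 / 2) :
    ∃ n₀ : ℕ, ∀ n ≥ n₀, ∃ M : Matrix (Fin n) (Fin n) F,
      ∀ S : Matrix (Fin n) (Fin n) F,
        nonzeroEntries S ≤ ⌊δ * (n : ℝ) ^ 2 / Real.logb 2 n⌋₊ →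
        ε * n < ((M + S).rank : ℝ) := by
  rw [← eventually_atTop]
  filter_upwards [eventually_rigidity_exponent_lt hε.le hδ.le hεδ, eventually_ne_atTop 0]
    with n hexp hn
  obtain ⟨M, hM⟩ := exists_isRigid_of_card_lt (F := F) hn
    (pow_mul_pow_lt_pow_of_exponent_lt Fintype.one_lt_card hn hexp)
  exact ⟨M, fun S hS => Nat.lt_of_floor_lt (hM S hS)⟩

/-- For every prime power `q`, every finite field `F` with `|F| = q`, and all reals
`ε, δ > 0` with `ε + δ < 1/2`, for all sufficiently large `n` there exists an `n × n`
matrix `M` over `F` that is `(εn, ⌊δn²/log₂ n⌋)`-rigid: for every `n × n` matrix `S`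
over `F` with at most `⌊δ·n²/log₂ n⌋` nonzero entries, `rank (M + S) > εn`. -/
theorem exists_rigid_matrix (q : ℕ) (hq : IsPrimePow q)
    (F : Type) [Field F] [Fintype F] [DecidableEq F] (hF : Fintype.card F = q)
    (ε δ : ℝ) (hε : 0 < ε) (hδ : 0 < δ) (hεδ : ε + δ < 1 / 2) :
    ∃ n₀ : ℕ, ∀ n ≥ n₀, ∃ M : Matrix (Fin n) (Fin n) F,
      ∀ S : Matrix (Fin n) (Fin n) F,
        nonzeroEntries S ≤ ⌊δ * (n : ℝ) ^ 2 / Real.logb 2 n⌋₊ →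
        ε * n < ((M + S).rank : ℝ) :=
  exists_rigid_matrix_general F ε δ hε hδ hεδ
end

section
/- There exists a natural number n₀ such that for all n ≥ n₀ and every real ε with 1/n ≤ ε < 1/2, setting d = ⌈4/ε²⌉, there exists a function f : ({0,1}^n) × ({0,1}^n) → {0,1} such that for all subsets X, Y ⊆ {0,1}^n with |X| = |Y| = d·n, one has |( |{(x,y) ∈ X × Y : f(x,y) = 1}| / (d·n)² ) − 1/2| ≤ ε. -/
open Finset Real

section TwoSourceAux

variable {D : Type*} [Fintype D] [DecidableEq D]

/-- The number of points of `P` on which `f` takes the value `true`. -/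
def cntE (P : Finset D) (f : D → Bool) : ℕ := (P.filter (fun p => f p = true)).card

lemma sum_pow_cnt (P : Finset D) (t : ℝ) :
    ∑ f : D → Bool, t ^ cntE P f
      = (1 + t) ^ P.card * 2 ^ (Fintype.card D - P.card) := by
  have key : ∀ f : D → Bool,
      t ^ cntE P f = ∏ p, (if p ∈ P ∧ f p = true then t else (1:ℝ)) := by
    intro f
    rw [Finset.prod_ite, Finset.prod_const, Finset.prod_const, one_pow, mul_one]
    congr 1
    unfold cntE
    congr 1
    ext p; simp
  simp_rw [key]
  rw [← Fintype.piFinset_univ,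
    Finset.sum_prod_piFinset (univ : Finset Bool)
      (fun p b => if p ∈ P ∧ b = true then t else (1:ℝ))]
  have : ∀ p : D, (∑ b : Bool, if p ∈ P ∧ b = true then t else (1:ℝ))
      = if p ∈ P then 1 + t else 2 := by
    intro p
    rw [Fintype.sum_bool]
    by_cases h : p ∈ P <;> simp [h] <;> ring
  simp_rw [this]
  rw [Finset.prod_ite, Finset.prod_const, Finset.prod_const,
    Finset.filter_univ_mem, Finset.filter_not, Finset.filter_univ_mem,
    Finset.card_sdiff_of_subset (Finset.subset_univ P), Finset.card_univ]

lemma markov_ge (P : Finset D) (a l : ℝ) (hl : 0 ≤ l) :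
    ((univ.filter (fun f : D → Bool => a ≤ (cntE P f : ℝ))).card : ℝ) * Real.exp (l * a)
      ≤ (1 + Real.exp l) ^ P.card * 2 ^ (Fintype.card D - P.card) := by
  rw [← sum_pow_cnt P (Real.exp l)]
  calc ((univ.filter (fun f : D → Bool => a ≤ (cntE P f : ℝ))).card : ℝ) * Real.exp (l * a)
      = ∑ _f ∈ univ.filter (fun f : D → Bool => a ≤ (cntE P f : ℝ)), Real.exp (l * a) := by
        rw [Finset.sum_const, nsmul_eq_mul]
    _ ≤ ∑ f ∈ univ.filter (fun f : D → Bool => a ≤ (cntE P f : ℝ)), Real.exp l ^ cntE P f := by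
        refine Finset.sum_le_sum fun f hf => ?_
        have hf' := (Finset.mem_filter.mp hf).2
        rw [← Real.exp_nat_mul]
        exact Real.exp_le_exp.mpr (by nlinarith)
    _ ≤ ∑ f : D → Bool, Real.exp l ^ cntE P f := by
        refine Finset.sum_le_sum_of_subset_of_nonneg (Finset.filter_subset _ _)
          (fun f _ _ => pow_nonneg (Real.exp_pos l).le _)

lemma markov_le (P : Finset D) (a l : ℝ) (hl : 0 ≤ l) :
    ((univ.filter (fun f : D → Bool => (cntE P f : ℝ) ≤ a)).card : ℝ) * Real.exp (-(l * a))
      ≤ (1 + Real.exp (-l)) ^ P.card * 2 ^ (Fintype.card D - P.card) := by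
  rw [← sum_pow_cnt P (Real.exp (-l))]
  calc ((univ.filter (fun f : D → Bool => (cntE P f : ℝ) ≤ a)).card : ℝ) * Real.exp (-(l * a))
      = ∑ _f ∈ univ.filter (fun f : D → Bool => (cntE P f : ℝ) ≤ a), Real.exp (-(l * a)) := by
        rw [Finset.sum_const, nsmul_eq_mul]
    _ ≤ ∑ f ∈ univ.filter (fun f : D → Bool => (cntE P f : ℝ) ≤ a), Real.exp (-l) ^ cntE P f := by
        refine Finset.sum_le_sum fun f hf => ?_
        have hf' := (Finset.mem_filter.mp hf).2
        rw [← Real.exp_nat_mul]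
        exact Real.exp_le_exp.mpr (by nlinarith)
    _ ≤ ∑ f : D → Bool, Real.exp (-l) ^ cntE P f := by
        refine Finset.sum_le_sum_of_subset_of_nonneg (Finset.filter_subset _ _)
          (fun f _ _ => pow_nonneg (Real.exp_pos _).le _)

lemma factor_upper {ε : ℝ} (hε : 0 < ε) :
    (1 + Real.exp (4*ε)) * Real.exp (-(4*ε*(1/2+ε))) ≤ 2 * Real.exp (-(2*ε^2)) := by
  have h := Real.cosh_le_exp_half_sq (2*ε)
  rw [Real.cosh_eq] at h
  have e1 : Real.exp (-(4*ε*(1/2+ε))) = Real.exp (-(2*ε)) * Real.exp (-(4*ε^2)) := by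
    rw [← Real.exp_add]; ring_nf
  have e2 : (1 + Real.exp (4*ε)) * Real.exp (-(2*ε))
      = Real.exp (-(2*ε)) + Real.exp (2*ε) := by
    rw [add_mul, one_mul, ← Real.exp_add]; ring_nf
  have e3 : Real.exp (2*ε^2) * Real.exp (-(4*ε^2)) = Real.exp (-(2*ε^2)) := by
    rw [← Real.exp_add]; ring_nf
  have h4 : Real.exp (2*ε) + Real.exp (-(2*ε)) ≤ 2 * Real.exp (2*ε^2) := by
    have : (2*ε)^2/2 = 2*ε^2 := by ring
    rw [this] at h; linarith
  calc (1 + Real.exp (4*ε)) * Real.exp (-(4*ε*(1/2+ε)))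
      = ((1 + Real.exp (4*ε)) * Real.exp (-(2*ε))) * Real.exp (-(4*ε^2)) := by
        rw [e1]; ring
    _ = (Real.exp (-(2*ε)) + Real.exp (2*ε)) * Real.exp (-(4*ε^2)) := by rw [e2]
    _ ≤ (2 * Real.exp (2*ε^2)) * Real.exp (-(4*ε^2)) := by
        have := Real.exp_pos (-(4*ε^2)); nlinarith
    _ = 2 * Real.exp (-(2*ε^2)) := by rw [mul_assoc, e3]

lemma factor_lower {ε : ℝ} (hε : 0 < ε) :
    (1 + Real.exp (-(4*ε))) * Real.exp (4*ε*(1/2-ε)) ≤ 2 * Real.exp (-(2*ε^2)) := by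
  have h := Real.cosh_le_exp_half_sq (2*ε)
  rw [Real.cosh_eq] at h
  have e1 : Real.exp (4*ε*(1/2-ε)) = Real.exp (2*ε) * Real.exp (-(4*ε^2)) := by
    rw [← Real.exp_add]; ring_nf
  have e2 : (1 + Real.exp (-(4*ε))) * Real.exp (2*ε)
      = Real.exp (2*ε) + Real.exp (-(2*ε)) := by
    rw [add_mul, one_mul, ← Real.exp_add]; ring_nf
  have e3 : Real.exp (2*ε^2) * Real.exp (-(4*ε^2)) = Real.exp (-(2*ε^2)) := by
    rw [← Real.exp_add]; ring_nf
  have h4 : Real.exp (2*ε) + Real.exp (-(2*ε)) ≤ 2 * Real.exp (2*ε^2) := by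
    have : (2*ε)^2/2 = 2*ε^2 := by ring
    rw [this] at h; linarith
  calc (1 + Real.exp (-(4*ε))) * Real.exp (4*ε*(1/2-ε))
      = ((1 + Real.exp (-(4*ε))) * Real.exp (2*ε)) * Real.exp (-(4*ε^2)) := by
        rw [e1]; ring
    _ = (Real.exp (2*ε) + Real.exp (-(2*ε))) * Real.exp (-(4*ε^2)) := by rw [e2]
    _ ≤ (2 * Real.exp (2*ε^2)) * Real.exp (-(4*ε^2)) := by
        have := Real.exp_pos (-(4*ε^2)); nlinarith
    _ = 2 * Real.exp (-(2*ε^2)) := by rw [mul_assoc, e3]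

lemma bad_bound (P : Finset D) (hP : 0 < P.card) {ε : ℝ} (hε : 0 < ε) :
    ((univ.filter (fun f : D → Bool =>
        ε < |((cntE P f : ℝ)) / (P.card : ℝ) - 1/2|)).card : ℝ)
      ≤ 2 * 2 ^ Fintype.card D * Real.exp (-(2 * ε^2 * P.card)) := by
  have hmM : P.card ≤ Fintype.card D := by
    simpa using Finset.card_le_card (Finset.subset_univ P)
  have hN : (0:ℝ) < P.card := by exact_mod_cast hP
  set U := univ.filter (fun f : D → Bool => (P.card:ℝ)*(1/2+ε) ≤ (cntE P f : ℝ)) with hUdef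
  set L := univ.filter (fun f : D → Bool => (cntE P f : ℝ) ≤ (P.card:ℝ)*(1/2-ε)) with hLdef
  have hsub : univ.filter (fun f : D → Bool =>
      ε < |((cntE P f : ℝ)) / (P.card : ℝ) - 1/2|) ⊆ U ∪ L := by
    intro f hf
    have hf' := (Finset.mem_filter.mp hf).2
    rw [Finset.mem_union, hUdef, hLdef, Finset.mem_filter, Finset.mem_filter]
    rcases abs_cases ((cntE P f : ℝ) / (P.card : ℝ) - 1/2) with ⟨heq, _⟩ | ⟨heq, _⟩
    · left
      refine ⟨Finset.mem_univ _, ?_⟩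
      rw [heq] at hf'
      have : (1/2+ε) ≤ (cntE P f : ℝ) / (P.card : ℝ) := by linarith
      calc (P.card:ℝ)*(1/2+ε) ≤ (P.card:ℝ) * ((cntE P f : ℝ) / (P.card : ℝ)) := by
            exact mul_le_mul_of_nonneg_left this hN.le
        _ = (cntE P f : ℝ) := by field_simp
    · right
      refine ⟨Finset.mem_univ _, ?_⟩
      rw [heq] at hf'
      have : (cntE P f : ℝ) / (P.card : ℝ) ≤ (1/2-ε) := by linarith
      calc (cntE P f : ℝ) = (P.card:ℝ) * ((cntE P f : ℝ) / (P.card : ℝ)) := by field_simp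
        _ ≤ (P.card:ℝ)*(1/2-ε) := mul_le_mul_of_nonneg_left this hN.le
  have hUc : (U.card : ℝ) ≤ 2 ^ Fintype.card D * Real.exp (-(2 * ε^2 * P.card)) := by
    have hm := markov_ge P ((P.card:ℝ)*(1/2+ε)) (4*ε) (by positivity)
    have step1 : (U.card : ℝ)
        ≤ (1 + Real.exp (4*ε)) ^ P.card * 2 ^ (Fintype.card D - P.card)
          * Real.exp (-(4*ε * ((P.card:ℝ)*(1/2+ε)))) := by
      have e0 : (U.card : ℝ)
          = ((U.card : ℝ) * Real.exp (4*ε * ((P.card:ℝ)*(1/2+ε))))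
            * Real.exp (-(4*ε * ((P.card:ℝ)*(1/2+ε)))) := by
        rw [mul_assoc, ← Real.exp_add]; simp
      rw [e0]
      exact mul_le_mul_of_nonneg_right hm (Real.exp_pos _).le
    have e1 : Real.exp (-(4*ε * ((P.card:ℝ)*(1/2+ε))))
        = Real.exp (-(4*ε*(1/2+ε))) ^ P.card := by
      rw [show -(4*ε * ((P.card:ℝ)*(1/2+ε))) = (P.card:ℝ) * (-(4*ε*(1/2+ε))) by ring,
        Real.exp_nat_mul]
    have step2 : (1 + Real.exp (4*ε)) ^ P.card * 2 ^ (Fintype.card D - P.card)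
          * Real.exp (-(4*ε * ((P.card:ℝ)*(1/2+ε))))
        = ((1 + Real.exp (4*ε)) * Real.exp (-(4*ε*(1/2+ε)))) ^ P.card
          * 2 ^ (Fintype.card D - P.card) := by
      rw [e1, mul_pow]; ring
    have step3 : ((1 + Real.exp (4*ε)) * Real.exp (-(4*ε*(1/2+ε)))) ^ P.card
          * 2 ^ (Fintype.card D - P.card)
        ≤ (2 * Real.exp (-(2*ε^2))) ^ P.card * 2 ^ (Fintype.card D - P.card) := by
      refine mul_le_mul_of_nonneg_right ?_ (by positivity)
      exact pow_le_pow_left₀ (by positivity) (factor_upper hε) _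
    have step4 : (2 * Real.exp (-(2*ε^2))) ^ P.card * 2 ^ (Fintype.card D - P.card)
        = 2 ^ Fintype.card D * Real.exp (-(2 * ε^2 * P.card)) := by
      have h2 : (2:ℝ) ^ P.card * 2 ^ (Fintype.card D - P.card) = 2 ^ Fintype.card D := by
        rw [← pow_add, Nat.add_sub_cancel' hmM]
      rw [mul_pow, show Real.exp (-(2*ε^2)) ^ P.card = Real.exp (-(2 * ε^2 * P.card)) by
        rw [← Real.exp_nat_mul]; ring_nf]
      rw [mul_right_comm, h2]
    calc (U.card : ℝ) ≤ _ := step1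
      _ = _ := step2
      _ ≤ _ := step3
      _ = _ := step4
  have hLc : (L.card : ℝ) ≤ 2 ^ Fintype.card D * Real.exp (-(2 * ε^2 * P.card)) := by
    have hm := markov_le P ((P.card:ℝ)*(1/2-ε)) (4*ε) (by positivity)
    have step1 : (L.card : ℝ)
        ≤ (1 + Real.exp (-(4*ε))) ^ P.card * 2 ^ (Fintype.card D - P.card)
          * Real.exp (4*ε * ((P.card:ℝ)*(1/2-ε))) := by
      have e0 : (L.card : ℝ)
          = ((L.card : ℝ) * Real.exp (-(4*ε * ((P.card:ℝ)*(1/2-ε)))))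
            * Real.exp (4*ε * ((P.card:ℝ)*(1/2-ε))) := by
        rw [mul_assoc, ← Real.exp_add]; simp
      rw [e0]
      exact mul_le_mul_of_nonneg_right hm (Real.exp_pos _).le
    have e1 : Real.exp (4*ε * ((P.card:ℝ)*(1/2-ε)))
        = Real.exp (4*ε*(1/2-ε)) ^ P.card := by
      rw [show 4*ε * ((P.card:ℝ)*(1/2-ε)) = (P.card:ℝ) * (4*ε*(1/2-ε)) by ring,
        Real.exp_nat_mul]
    have step2 : (1 + Real.exp (-(4*ε))) ^ P.card * 2 ^ (Fintype.card D - P.card)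
          * Real.exp (4*ε * ((P.card:ℝ)*(1/2-ε)))
        = ((1 + Real.exp (-(4*ε))) * Real.exp (4*ε*(1/2-ε))) ^ P.card
          * 2 ^ (Fintype.card D - P.card) := by
      rw [e1, mul_pow]; ring
    have step3 : ((1 + Real.exp (-(4*ε))) * Real.exp (4*ε*(1/2-ε))) ^ P.card
          * 2 ^ (Fintype.card D - P.card)
        ≤ (2 * Real.exp (-(2*ε^2))) ^ P.card * 2 ^ (Fintype.card D - P.card) := by
      refine mul_le_mul_of_nonneg_right ?_ (by positivity)
      exact pow_le_pow_left₀ (by positivity) (factor_lower hε) _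
    have step4 : (2 * Real.exp (-(2*ε^2))) ^ P.card * 2 ^ (Fintype.card D - P.card)
        = 2 ^ Fintype.card D * Real.exp (-(2 * ε^2 * P.card)) := by
      have h2 : (2:ℝ) ^ P.card * 2 ^ (Fintype.card D - P.card) = 2 ^ Fintype.card D := by
        rw [← pow_add, Nat.add_sub_cancel' hmM]
      rw [mul_pow, show Real.exp (-(2*ε^2)) ^ P.card = Real.exp (-(2 * ε^2 * P.card)) by
        rw [← Real.exp_nat_mul]; ring_nf]
      rw [mul_right_comm, h2]
    calc (L.card : ℝ) ≤ _ := step1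
      _ = _ := step2
      _ ≤ _ := step3
      _ = _ := step4
  have hcard : ((univ.filter (fun f : D → Bool =>
      ε < |((cntE P f : ℝ)) / (P.card : ℝ) - 1/2|)).card : ℝ)
        ≤ (U.card : ℝ) + (L.card : ℝ) := by
    have h1 := Finset.card_le_card hsub
    have h2 := Finset.card_union_le U L
    exact_mod_cast h1.trans h2
  calc _ ≤ (U.card : ℝ) + (L.card : ℝ) := hcard
    _ ≤ 2 ^ Fintype.card D * Real.exp (-(2 * ε^2 * P.card))
        + 2 ^ Fintype.card D * Real.exp (-(2 * ε^2 * P.card)) := add_le_add hUc hLc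
    _ = 2 * 2 ^ Fintype.card D * Real.exp (-(2 * ε^2 * P.card)) := by ring

end TwoSourceAux

/-- **Existence of two-source extractors for min-entropy `log n + 2 log(1/ε) + O(1)`.**
There exists `n₀` such that for all `n ≥ n₀` and every real `ε` with `1/n ≤ ε < 1/2`,
setting `d = ⌈4/ε²⌉`, there is a function `f : {0,1}^n × {0,1}^n → {0,1}` such that for
all sets `X, Y ⊆ {0,1}^n` with `|X| = |Y| = d·n`, the fraction of pairs `(x, y) ∈ X × Y`
with `f (x, y) = 1` is within `ε` of `1/2`. -/
theorem exists_two_source_extractor : ∃ n₀ : ℕ, ∀ n ≥ n₀, ∀ ε : ℝ,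
    1 / (n : ℝ) ≤ ε → ε < 1 / 2 →
    ∃ f : (Fin n → Bool) × (Fin n → Bool) → Bool,
      ∀ X Y : Finset (Fin n → Bool),
        X.card = ⌈4 / ε ^ 2⌉₊ * n → Y.card = ⌈4 / ε ^ 2⌉₊ * n →
        |(((X ×ˢ Y).filter (fun p => f p = true)).card : ℝ) / ((⌈4 / ε ^ 2⌉₊ * n : ℕ) : ℝ) ^ 2
          - 1 / 2| ≤ ε := by
  classical
  refine ⟨1, fun n hn ε hε1 hε2 => ?_⟩
  have hn' : (0:ℝ) < n := by exact_mod_cast hn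
  have hε : 0 < ε := lt_of_lt_of_le (by positivity) hε1
  set m : ℕ := ⌈4 / ε ^ 2⌉₊ * n with hmdef
  have hd : 1 ≤ ⌈4 / ε ^ 2⌉₊ := Nat.one_le_iff_ne_zero.mpr (by
    have : 0 < ⌈4 / ε ^ 2⌉₊ := Nat.ceil_pos.mpr (by positivity)
    omega)
  have hm1 : 1 ≤ m := by
    calc 1 = 1 * 1 := rfl
      _ ≤ ⌈4 / ε ^ 2⌉₊ * n := Nat.mul_le_mul hd hn
  have hm' : (0:ℝ) < m := by exact_mod_cast hm1
  have hεm : 4 * (n:ℝ) ≤ ε^2 * m := by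
    have h1 : (4 / ε ^ 2 : ℝ) ≤ (⌈4 / ε ^ 2⌉₊ : ℕ) := Nat.le_ceil _
    have h2 : (m:ℝ) = (⌈4 / ε ^ 2⌉₊ : ℕ) * n := by rw [hmdef]; push_cast; ring
    rw [h2]
    have h3 : (4 / ε ^ 2 : ℝ) * n ≤ (⌈4 / ε ^ 2⌉₊ : ℕ) * n :=
      mul_le_mul_of_nonneg_right h1 hn'.le
    have h4 : ε ^ 2 * ((4 / ε ^ 2 : ℝ) * n) = 4 * n := by field_simp
    nlinarith [sq_nonneg ε]
  -- domain
  let D' := (Fin n → Bool) × (Fin n → Bool)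
  let M : ℕ := Fintype.card D'
  set S : Finset (Finset (Fin n → Bool) × Finset (Fin n → Bool)) :=
      (Finset.powersetCard m univ) ×ˢ (Finset.powersetCard m univ) with hS
  set Bad : Finset (D' → Bool) := univ.filter (fun f =>
      ∃ X Y : Finset (Fin n → Bool), X.card = m ∧ Y.card = m ∧
        ε < |(((X ×ˢ Y).filter (fun p => f p = true)).card : ℝ) / ((m : ℕ) : ℝ) ^ 2
          - 1/2|) with hBad
  have hBadsub : Bad ⊆ S.biUnion (fun XY =>
      univ.filter (fun f : D' → Bool =>
        ε < |((cntE (XY.1 ×ˢ XY.2) f : ℝ)) / ((XY.1 ×ˢ XY.2).card : ℝ) - 1/2|)) := by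
    intro f hf
    rw [hBad, Finset.mem_filter] at hf
    obtain ⟨-, X, Y, hX, hY, hb⟩ := hf
    rw [Finset.mem_biUnion]
    refine ⟨(X, Y), ?_, ?_⟩
    · rw [hS, Finset.mem_product]
      exact ⟨Finset.mem_powersetCard_univ.mpr hX, Finset.mem_powersetCard_univ.mpr hY⟩
    · rw [Finset.mem_filter]
      refine ⟨Finset.mem_univ _, ?_⟩
      have hc : ((X ×ˢ Y).card : ℝ) = ((m : ℕ) : ℝ) ^ 2 := by
        rw [Finset.card_product, hX, hY]; push_cast; ring
      rw [cntE, hc]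
      exact hb
  -- per-pair bound
  have hper : ∀ XY ∈ S,
      ((univ.filter (fun f : D' → Bool =>
        ε < |((cntE (XY.1 ×ˢ XY.2) f : ℝ)) / ((XY.1 ×ˢ XY.2).card : ℝ) - 1/2|)).card : ℝ)
      ≤ 2 * 2 ^ M * Real.exp (-(2 * ε^2 * (m*m : ℕ))) := by
    intro XY hXY
    rw [hS, Finset.mem_product] at hXY
    have hX := Finset.mem_powersetCard_univ.mp hXY.1
    have hY := Finset.mem_powersetCard_univ.mp hXY.2
    have hPc : (XY.1 ×ˢ XY.2).card = m * m := by rw [Finset.card_product, hX, hY]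
    have hbb := bad_bound (XY.1 ×ˢ XY.2) (by rw [hPc]; positivity) hε
    rw [hPc] at hbb
    rw [hPc]
    exact hbb
  -- cardinal chain
  have hScard : (S.card : ℝ) ≤ ((2:ℝ) ^ (n * m)) ^ 2 := by
    rw [hS, Finset.card_product, Finset.card_powersetCard, Finset.card_univ]
    have h1 : Fintype.card (Fin n → Bool) = 2 ^ n := by simp
    have h2 : (Fintype.card (Fin n → Bool)).choose m ≤ 2 ^ (n * m) := by
      rw [h1]
      calc (2 ^ n).choose m ≤ (2 ^ n) ^ m := Nat.choose_le_pow _ _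
        _ = 2 ^ (n * m) := (pow_mul 2 n m).symm
    push_cast
    have h2' : (((Fintype.card (Fin n → Bool)).choose m : ℕ) : ℝ) ≤ (2:ℝ) ^ (n * m) := by
      exact_mod_cast h2
    have h0 : (0:ℝ) ≤ (((Fintype.card (Fin n → Bool)).choose m : ℕ) : ℝ) := Nat.cast_nonneg _
    nlinarith [h2', h0]
  have hBadcard : (Bad.card : ℝ)
      ≤ ((2:ℝ) ^ (n * m)) ^ 2 * (2 * 2 ^ M * Real.exp (-(2 * ε^2 * (m*m : ℕ)))) := by
    have h1 : Bad.card ≤ ∑ XY ∈ S,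
        (univ.filter (fun f : D' → Bool =>
          ε < |((cntE (XY.1 ×ˢ XY.2) f : ℝ)) / ((XY.1 ×ˢ XY.2).card : ℝ) - 1/2|)).card :=
      le_trans (Finset.card_le_card hBadsub) (Finset.card_biUnion_le)
    have h2 : ((∑ XY ∈ S, (univ.filter (fun f : D' → Bool =>
          ε < |((cntE (XY.1 ×ˢ XY.2) f : ℝ)) / ((XY.1 ×ˢ XY.2).card : ℝ) - 1/2|)).card : ℕ) : ℝ)
        ≤ (S.card : ℝ) * (2 * 2 ^ M * Real.exp (-(2 * ε^2 * (m*m : ℕ)))) := by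
      rw [Nat.cast_sum]
      calc ∑ XY ∈ S, ((univ.filter (fun f : D' → Bool =>
            ε < |((cntE (XY.1 ×ˢ XY.2) f : ℝ)) / ((XY.1 ×ˢ XY.2).card : ℝ) - 1/2|)).card : ℝ)
          ≤ ∑ _XY ∈ S, (2 * 2 ^ M * Real.exp (-(2 * ε^2 * (m*m : ℕ)))) :=
            Finset.sum_le_sum hper
        _ = (S.card : ℝ) * (2 * 2 ^ M * Real.exp (-(2 * ε^2 * (m*m : ℕ)))) := by
            rw [Finset.sum_const, nsmul_eq_mul]
    calc (Bad.card : ℝ) ≤ _ := by exact_mod_cast h1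
      _ ≤ (S.card : ℝ) * (2 * 2 ^ M * Real.exp (-(2 * ε^2 * (m*m : ℕ)))) := h2
      _ ≤ ((2:ℝ) ^ (n * m)) ^ 2 * (2 * 2 ^ M * Real.exp (-(2 * ε^2 * (m*m : ℕ)))) := by
          refine mul_le_mul_of_nonneg_right hScard (by positivity)
  -- strict inequality
  have hkey : ((2:ℝ) ^ (n * m)) ^ 2 * (2 * 2 ^ M * Real.exp (-(2 * ε^2 * (m*m : ℕ))))
      < (2:ℝ) ^ M := by
    have hexp : ((2:ℝ) ^ (n * m)) ^ 2 * 2 ≤ Real.exp ((2 * (n * m) + 1 : ℕ)) := by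
      have h2e : (2:ℝ) ≤ Real.exp 1 := by
        have := Real.exp_one_gt_d9; norm_num at this ⊢; linarith
      have : ((2:ℝ) ^ (n * m)) ^ 2 * 2 = 2 ^ (2 * (n * m) + 1) := by
        rw [← pow_mul, ← pow_succ]; ring_nf
      rw [this]
      calc (2:ℝ) ^ (2 * (n * m) + 1) ≤ (Real.exp 1) ^ (2 * (n * m) + 1) :=
            pow_le_pow_left₀ (by norm_num) h2e _
        _ = Real.exp ((2 * (n * m) + 1 : ℕ)) := by rw [← Real.exp_nat_mul, mul_one]
    have harg : ((2 * (n * m) + 1 : ℕ) : ℝ) < 2 * ε^2 * (m*m : ℕ) := by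
      push_cast
      have hnm : (1:ℝ) ≤ (n:ℝ) * m := by
        have : (1:ℝ) ≤ (n:ℝ) := by exact_mod_cast hn
        nlinarith
      nlinarith [mul_le_mul_of_nonneg_right hεm (le_of_lt hm')]
    calc ((2:ℝ) ^ (n * m)) ^ 2 * (2 * 2 ^ M * Real.exp (-(2 * ε^2 * (m*m : ℕ))))
        = (((2:ℝ) ^ (n * m)) ^ 2 * 2) * Real.exp (-(2 * ε^2 * (m*m : ℕ))) * 2 ^ M := by ring
      _ ≤ Real.exp ((2 * (n * m) + 1 : ℕ)) * Real.exp (-(2 * ε^2 * (m*m : ℕ))) * 2 ^ M := by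
          refine mul_le_mul_of_nonneg_right (mul_le_mul_of_nonneg_right hexp (by positivity))
            (by positivity)
      _ < 1 * 2 ^ M := by
          refine mul_lt_mul_of_pos_right ?_ (by positivity)
          rw [← Real.exp_add]
          have : ((2 * (n * m) + 1 : ℕ) : ℝ) + -(2 * ε^2 * (m*m : ℕ)) < 0 := by linarith
          calc Real.exp _ < Real.exp 0 := Real.exp_lt_exp.mpr this
            _ = 1 := Real.exp_zero
      _ = 2 ^ M := one_mul _
  have hlt : Bad.card < Fintype.card (D' → Bool) := by
    have hcf : (Fintype.card (D' → Bool) : ℝ) = (2:ℝ) ^ M := by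
      rw [Fintype.card_fun]; push_cast; simp [M]
    have : (Bad.card : ℝ) < (Fintype.card (D' → Bool) : ℝ) := by
      rw [hcf]; exact lt_of_le_of_lt hBadcard hkey
    exact_mod_cast this
  obtain ⟨f, hfB⟩ : ∃ f : D' → Bool, f ∉ Bad := by
    by_contra hcon
    push_neg at hcon
    have : (univ : Finset (D' → Bool)) ⊆ Bad := fun f _ => hcon f
    have := Finset.card_le_card this
    rw [Finset.card_univ] at this
    omega
  refine ⟨f, fun X Y hX hY => ?_⟩
  rw [hBad, Finset.mem_filter] at hfB
  push_neg at hfB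
  have := hfB (Finset.mem_univ f) X Y hX hY
  linarith [this]
end

section
/- For every real δ with 0 < δ < 1 and all sufficiently large n, setting b = 2^⌊δn⌋ and k = ⌊δn⌋, there exists a function f : ({0,1}^n) × ({0,1}^n) → {0,1} that admits no (b, k) bit-probe scheme. -/
/-!
Counting: a scheme is a triple `(G, H, φ)`, and there are at most
`(2 ^ b * b ^ k) ^ 2 ^ n * 2 ^ (2 ^ n * 2 ^ k)` of them, while there are `2 ^ (2 ^ n * 2 ^ n)`
functions `f`. For `b = 2 ^ m` and `k = m` the number of schemes is `2 ^ ((2 * 2 ^ m + m * m) * 2 ^ n)`,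
which is fewer than the number of functions as soon as `2 * 2 ^ m + m * m < 2 ^ n`; with
`m = ⌊δ n⌋` this holds once `m ≥ 4` and `n - m ≥ 3`, i.e. for all large `n`.
-/

/-- A `(b, k)` bit-probe scheme for `f : {0,1}^n × {0,1}^n → {0,1}`: an encoding
`G : {0,1}^n → {0,1}^b`, a probe map `H` assigning to each query `y` a list of `k`
positions in the encoding, and a decoder `φ`, such that for all `x, y`, `f (x, y)` equals
`φ` applied to the `k` probed bits of `G x` (at positions `H y`) and the query `y`. -/
def HasProbeScheme {n : ℕ} (b k : ℕ) (f : (Fin n → Bool) × (Fin n → Bool) → Bool) : Prop :=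
  ∃ (G : (Fin n → Bool) → (Fin b → Bool)) (H : (Fin n → Bool) → (Fin k → Fin b))
    (φ : (Fin k → Bool) → (Fin n → Bool) → Bool),
    ∀ x y : Fin n → Bool, f (x, y) = φ (fun j => G x (H y j)) y

open Filter

theorem exists_not_hasProbeScheme_of_lt {n b k : ℕ}
    (h : (2 ^ b * b ^ k) ^ 2 ^ n * 2 ^ (2 ^ n * 2 ^ k) < 2 ^ (2 ^ n * 2 ^ n)) :
    ∃ f : (Fin n → Bool) × (Fin n → Bool) → Bool, ¬ HasProbeScheme b k f := by
  by_contra! hall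
  let realize : ((Fin n → Bool) → (Fin b → Bool)) × ((Fin n → Bool) → (Fin k → Fin b)) ×
      ((Fin k → Bool) → (Fin n → Bool) → Bool) → (Fin n → Bool) × (Fin n → Bool) → Bool :=
    fun ⟨G, H, φ⟩ p => φ (fun j => G p.1 (H p.2 j)) p.2
  have hsurj : Function.Surjective realize := fun f => by
    obtain ⟨G, H, φ, hf⟩ := hall f
    exact ⟨(G, H, φ), funext fun p => (hf p.1 p.2).symm⟩
  have hcard := Fintype.card_le_of_surjective realize hsurj
  simp only [Fintype.card_fun, Fintype.card_prod, Fintype.card_fin, Fintype.card_bool] at hcard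
  exact (lt_of_eq_of_lt (by ring) h).not_ge hcard

theorem exists_not_hasProbeScheme_two_pow {n m : ℕ} (h : 2 * 2 ^ m + m * m < 2 ^ n) :
    ∃ f : (Fin n → Bool) × (Fin n → Bool) → Bool, ¬ HasProbeScheme (2 ^ m) m f := by
  apply exists_not_hasProbeScheme_of_lt
  have hschemes : (2 ^ 2 ^ m * (2 ^ m) ^ m) ^ 2 ^ n * 2 ^ (2 ^ n * 2 ^ m)
      = 2 ^ ((2 * 2 ^ m + m * m) * 2 ^ n) := by ring
  rw [hschemes]
  exact Nat.pow_lt_pow_right (by norm_num) (Nat.mul_lt_mul_of_pos_right h (by positivity))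

theorem mul_self_le_two_pow {m : ℕ} (hm : 4 ≤ m) : m * m ≤ 2 ^ m := by
  induction m, hm using Nat.le_induction with
  | base => norm_num
  | succ m hm ih =>
    calc (m + 1) * (m + 1) = m * m + (2 * m + 1) := by ring
      _ ≤ 2 ^ m + 2 ^ m := by nlinarith
      _ = 2 ^ (m + 1) := by ring

theorem two_mul_two_pow_add_mul_self_lt {m n : ℕ} (hm : 4 ≤ m) (hmn : m + 3 ≤ n) :
    2 * 2 ^ m + m * m < 2 ^ n :=
  calc 2 * 2 ^ m + m * m ≤ 3 * 2 ^ m := by linarith [mul_self_le_two_pow hm]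
    _ < 2 ^ (m + 3) := by rw [pow_add]; linarith [Nat.one_le_two_pow (n := m)]
    _ ≤ 2 ^ n := Nat.pow_le_pow_right two_pos hmn

theorem eventually_floor_mul_bounds {δ : ℝ} (h0 : 0 < δ) (h1 : δ < 1) :
    ∀ᶠ n : ℕ in atTop, 4 ≤ ⌊δ * n⌋₊ ∧ ⌊δ * n⌋₊ + 3 ≤ n := by
  have hfloor : Tendsto (fun n : ℕ => ⌊δ * n⌋₊) atTop atTop :=
    tendsto_nat_floor_atTop.comp (tendsto_natCast_atTop_atTop.const_mul_atTop h0)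
  have hgap : ∀ᶠ n : ℕ in atTop, 3 ≤ (1 - δ) * n :=
    (tendsto_natCast_atTop_atTop.const_mul_atTop (sub_pos.mpr h1)).eventually_ge_atTop 3
  filter_upwards [hfloor.eventually_ge_atTop 4, hgap] with n hm hn
  refine ⟨hm, ?_⟩
  have : (⌊δ * n⌋₊ : ℝ) + 3 ≤ n := by
    linarith [Nat.floor_le (by positivity : 0 ≤ δ * n)]
  exact_mod_cast this

/-- **Existence of hard bit-probe problems.** For every real `δ` with `0 < δ < 1` and all
sufficiently large `n`, setting `b = 2^⌊δn⌋` and `k = ⌊δn⌋`, there is a function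
`f : {0,1}^n × {0,1}^n → {0,1}` that admits no `(b, k)` bit-probe scheme. -/
theorem exists_hard_bit_probe_problem (δ : ℝ) (h0 : 0 < δ) (h1 : δ < 1) :
    ∃ n₀ : ℕ, ∀ n ≥ n₀, ∃ f : (Fin n → Bool) × (Fin n → Bool) → Bool,
      ¬ HasProbeScheme (2 ^ ⌊δ * n⌋₊) ⌊δ * n⌋₊ f := by
  obtain ⟨n₀, hn₀⟩ := eventually_atTop.mp (eventually_floor_mul_bounds h0 h1)
  exact ⟨n₀, fun n hn => exists_not_hasProbeScheme_two_pow
    (two_mul_two_pow_add_mul_self_lt (hn₀ n hn).1 (hn₀ n hn).2)⟩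
end
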